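/- arXiv:1009.2249 — 3 statements merged into one kernel-verified Lean document; each statement's English description precedes it below -/
import Mathlib

section
/- Let T be a contraction on a complex Hilbert space H whose defect spaces 𝒟_T and 𝒟_{T*} both have finite dimension N, and let E be a complex Hilbert space of dimension N. For any choice of unitary operators ω : E → 𝒟_{T*} and ω_* : E → 𝒟_T, the operator U defined on H ⊕ E by U(x ⊕ e) = (T x + D_{T*}(ω e)) ⊕ (ω_*⁻¹(D_T x) − ω_*⁻¹(T*(ω e))) is a unitary operator on H ⊕ E whose compression to H equals T (i.e. a unitary N-dilation of T). -/
/-!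
The Julia operator `J = [[T, D_{T*}], [D_T, -T*]]` of a contraction maps `H ⊕ 𝒟_{T*}`
isometrically onto `H ⊕ 𝒟_T`, with inverse the Julia operator of `T*`. Both facts reduce to
`D_T² = 1 - T*T` and the intertwining relation `T D_T = D_{T*} T`; the latter follows from
`T (1 - T*T) = (1 - TT*) T` because the square root is a uniform limit of polynomials on a compact
set containing both spectra. The dilation is `J` transported along `1 ⊕ ω` and `1 ⊕ ω_*`.
-/

open scoped InnerProductSpace
open Filter Topology

/-- The numerical range of a bounded operator: `W(T) = {⟨Tx, x⟩ : ‖x‖ = 1}`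
(written with Mathlib's inner product, which is linear in the second variable). -/
def numericalRange {H : Type*} [NormedAddCommGroup H] [InnerProductSpace ℂ H]
    (T : H →L[ℂ] H) : Set ℂ :=
  {z | ∃ x : H, ‖x‖ = 1 ∧ (inner ℂ x (T x) : ℂ) = z}

/-- The defect operator `D_T = (I - T*T)^{1/2}` of a contraction. -/
noncomputable def defectOp {H : Type*} [NormedAddCommGroup H] [InnerProductSpace ℂ H]
    [CompleteSpace H] (T : H →L[ℂ] H) : H →L[ℂ] H :=
  CFC.sqrt (1 - ContinuousLinearMap.adjoint T * T)

/-- The defect space `𝒟_T = closure (range D_T)`. -/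
noncomputable def defectSpace {H : Type*} [NormedAddCommGroup H] [InnerProductSpace ℂ H]
    [CompleteSpace H] (T : H →L[ℂ] H) : Submodule ℂ H :=
  (LinearMap.range (defectOp T : H →ₗ[ℂ] H)).topologicalClosure

/-- `U` is a unitary dilation of `T` on the orthogonal direct sum `H ⊕ E`
(realized as `WithLp 2 (H × E)`): `U` is unitary and the compression of `U` to `H` is `T`. -/
def IsUnitaryDilation {H E : Type*} [NormedAddCommGroup H] [InnerProductSpace ℂ H]
    [CompleteSpace H] [NormedAddCommGroup E] [InnerProductSpace ℂ E] [CompleteSpace E]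
    (T : H →L[ℂ] H) (U : WithLp 2 (H × E) →L[ℂ] WithLp 2 (H × E)) : Prop :=
  U ∈ unitary (WithLp 2 (H × E) →L[ℂ] WithLp 2 (H × E)) ∧
    ∀ x : H, T x = (WithLp.equiv 2 (H × E) (U ((WithLp.equiv 2 (H × E)).symm (x, 0)))).1

open ContinuousLinearMap (adjoint adjoint_adjoint adjoint_inner_right)

section Intertwining

variable {A : Type*} [Ring A] [StarRing A] [Algebra ℝ A] [TopologicalSpace A]
  [ContinuousFunctionalCalculus ℝ A IsSelfAdjoint] [IsTopologicalRing A] [T2Space A]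

theorem SemiconjBy.cfcHomSuperset_real {a b x : A} (h : SemiconjBy x a b) (ha : IsSelfAdjoint a)
    (hb : IsSelfAdjoint b) {s : Set ℝ} [CompactSpace s] (has : spectrum ℝ a ⊆ s)
    (hbs : spectrum ℝ b ⊆ s) (f : C(s, ℝ)) :
    SemiconjBy x (cfcHomSuperset ha has f) (cfcHomSuperset hb hbs f) := by
  induction f using ContinuousMap.induction_on_of_compact with
  | const r =>
    have : ContinuousMap.const s r = algebraMap ℝ C(s, ℝ) r := rfl
    simp only [this, AlgHomClass.commutes]
    exact Algebra.commute_algebraMap_right r x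
  | id => rwa [cfcHomSuperset_id, cfcHomSuperset_id]
  | star_id =>
    rwa [map_star, map_star, cfcHomSuperset_id, cfcHomSuperset_id, ha.star_eq, hb.star_eq]
  | add f g hf hg => rw [map_add, map_add]; exact hf.add_right hg
  | mul f g hf hg => rw [map_mul, map_mul]; exact hf.mul_right hg
  | frequently f hf =>
    have hclosed :
        IsClosed {g | SemiconjBy x (cfcHomSuperset ha has g) (cfcHomSuperset hb hbs g)} :=
      isClosed_eq ((cfcHomSuperset_continuous ha has).const_mul x)
        ((cfcHomSuperset_continuous hb hbs).mul_const x)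
    exact hclosed.mem_of_frequently_of_tendsto hf tendsto_id

theorem SemiconjBy.cfc_real {a b x : A} (h : SemiconjBy x a b) (ha : IsSelfAdjoint a)
    (hb : IsSelfAdjoint b) (f : ℝ → ℝ)
    (hf : ContinuousOn f (spectrum ℝ a ∪ spectrum ℝ b)) : SemiconjBy x (cfc f a) (cfc f b) := by
  have : CompactSpace (spectrum ℝ a ∪ spectrum ℝ b : Set ℝ) := isCompact_iff_compactSpace.mp
    ((ContinuousFunctionalCalculus.isCompact_spectrum a).union
      (ContinuousFunctionalCalculus.isCompact_spectrum b))
  rw [cfc_apply f a ha (hf.mono Set.subset_union_left),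
    cfc_apply f b hb (hf.mono Set.subset_union_right)]
  exact h.cfcHomSuperset_real ha hb Set.subset_union_left Set.subset_union_right
    ⟨_, hf.domRestrict⟩

theorem SemiconjBy.sqrt {A : Type*} [CStarAlgebra A] [PartialOrder A] [StarOrderedRing A]
    {a b x : A} (h : SemiconjBy x a b) (ha : 0 ≤ a) (hb : 0 ≤ b) :
    SemiconjBy x (CFC.sqrt a) (CFC.sqrt b) := by
  rw [CFC.sqrt_eq_real_sqrt a, CFC.sqrt_eq_real_sqrt b, cfcₙ_eq_cfc, cfcₙ_eq_cfc]
  exact h.cfc_real ha.isSelfAdjoint hb.isSelfAdjoint _ Real.continuous_sqrt.continuousOn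

end Intertwining

section Defect

variable {H : Type*} [NormedAddCommGroup H] [InnerProductSpace ℂ H] [CompleteSpace H]
  {T : H →L[ℂ] H}

theorem one_sub_adjoint_mul_self_nonneg (hT : ‖T‖ ≤ 1) : 0 ≤ 1 - adjoint T * T := by
  rw [sub_nonneg, ← ContinuousLinearMap.star_eq_adjoint,
    ← CStarAlgebra.norm_le_one_iff_of_nonneg _ (star_mul_self_nonneg T),
    CStarRing.norm_star_mul_self]
  exact mul_le_one₀ hT (norm_nonneg T) hT

theorem norm_adjoint_le_one (hT : ‖T‖ ≤ 1) : ‖adjoint T‖ ≤ 1 := by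
  rwa [LinearIsometryEquiv.norm_map]

theorem defectOp_nonneg : 0 ≤ defectOp T := CFC.sqrt_nonneg _

theorem adjoint_defectOp : adjoint (defectOp T) = defectOp T :=
  IsSelfAdjoint.adjoint_eq defectOp_nonneg.isSelfAdjoint

theorem defectOp_mul_self (hT : ‖T‖ ≤ 1) : defectOp T * defectOp T = 1 - adjoint T * T :=
  CFC.sqrt_mul_sqrt_self _ (one_sub_adjoint_mul_self_nonneg hT)

theorem mul_defectOp (hT : ‖T‖ ≤ 1) : T * defectOp T = defectOp (adjoint T) * T := by
  have h : SemiconjBy T (1 - adjoint T * T) (1 - adjoint (adjoint T) * adjoint T) := by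
    rw [adjoint_adjoint, SemiconjBy]
    noncomm_ring
  exact h.sqrt (one_sub_adjoint_mul_self_nonneg hT)
    (one_sub_adjoint_mul_self_nonneg (norm_adjoint_le_one hT))

theorem defectOp_mul_adjoint (hT : ‖T‖ ≤ 1) :
    defectOp T * adjoint T = adjoint T * defectOp (adjoint T) := by
  simpa using (mul_defectOp (norm_adjoint_le_one hT)).symm

theorem norm_defectOp_apply_sq_add (hT : ‖T‖ ≤ 1) (x : H) :
    ‖defectOp T x‖ ^ 2 + ‖T x‖ ^ 2 = ‖x‖ ^ 2 := by
  calc ‖defectOp T x‖ ^ 2 + ‖T x‖ ^ 2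
      = RCLike.re ⟪(adjoint (defectOp T) * defectOp T + adjoint T * T) x, x⟫_ℂ := by
        simp only [ContinuousLinearMap.apply_norm_sq_eq_inner_adjoint_left, add_apply,
          inner_add_left, map_add, ContinuousLinearMap.mul_def]
    _ = ‖x‖ ^ 2 := by
        rw [adjoint_defectOp, defectOp_mul_self hT, sub_add_cancel, one_apply_eq_self,
          inner_self_eq_norm_sq]

theorem inner_apply_defectOp_adjoint_apply (hT : ‖T‖ ≤ 1) (x y : H) :
    ⟪T x, defectOp (adjoint T) y⟫_ℂ = ⟪defectOp T x, adjoint T y⟫_ℂ := by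
  rw [← adjoint_defectOp, adjoint_inner_right, ← mul_apply_eq_comp,
    ← mul_defectOp hT, mul_apply_eq_comp, adjoint_inner_right]

theorem apply_mem_defectSpace_adjoint (hT : ‖T‖ ≤ 1) {x : H} (hx : x ∈ defectSpace T) :
    T x ∈ defectSpace (adjoint T) := by
  have hmaps : Set.MapsTo T (Set.range (defectOp T)) (Set.range (defectOp (adjoint T))) := by
    rintro _ ⟨z, rfl⟩
    exact ⟨T z, congr($(mul_defectOp hT) z).symm⟩
  rw [defectSpace, ← SetLike.mem_coe, Submodule.topologicalClosure_coe] at hx ⊢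
  exact hmaps.closure T.continuous hx

theorem adjoint_apply_mem_defectSpace (hT : ‖T‖ ≤ 1) {y : H}
    (hy : y ∈ defectSpace (adjoint T)) : adjoint T y ∈ defectSpace T := by
  simpa using apply_mem_defectSpace_adjoint (norm_adjoint_le_one hT) hy

end Defect

section Julia

variable {H : Type*} [NormedAddCommGroup H] [InnerProductSpace ℂ H] [CompleteSpace H]
  {T : H →L[ℂ] H}

variable (T) in
noncomputable def juliaMap (p : H × H) : H × H :=
  (T p.1 + defectOp (adjoint T) p.2, defectOp T p.1 - adjoint T p.2)

theorem juliaMap_adjoint_juliaMap (hT : ‖T‖ ≤ 1) (p : H × H) :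
    juliaMap (adjoint T) (juliaMap T p) = p := by
  obtain ⟨x, d⟩ := p
  have hDD := congr($(defectOp_mul_self hT) x)
  have hDDs := congr($(defectOp_mul_self (norm_adjoint_le_one hT)) d)
  have hTD := congr($(mul_defectOp hT) x)
  have hDT := congr($(defectOp_mul_adjoint hT) d)
  simp only [mul_apply_eq_comp, sub_apply, one_apply_eq_self, adjoint_adjoint] at hDD hDDs hTD hDT
  simp only [juliaMap, adjoint_adjoint, map_add, map_sub, Prod.mk.injEq]
  constructor
  · rw [hDD, hDT]; abel
  · rw [hDDs, hTD]; abel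

theorem juliaMap_juliaMap_adjoint (hT : ‖T‖ ≤ 1) (p : H × H) :
    juliaMap T (juliaMap (adjoint T) p) = p := by
  simpa using juliaMap_adjoint_juliaMap (norm_adjoint_le_one hT) p

theorem norm_juliaMap_sq (hT : ‖T‖ ≤ 1) (p : H × H) :
    ‖(juliaMap T p).1‖ ^ 2 + ‖(juliaMap T p).2‖ ^ 2 = ‖p.1‖ ^ 2 + ‖p.2‖ ^ 2 := by
  obtain ⟨x, d⟩ := p
  have hx := norm_defectOp_apply_sq_add hT x
  have hd := norm_defectOp_apply_sq_add (norm_adjoint_le_one hT) d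
  simp only [juliaMap, norm_add_sq (𝕜 := ℂ), norm_sub_sq (𝕜 := ℂ),
    inner_apply_defectOp_adjoint_apply hT]
  linarith

theorem juliaMap_snd_mem_defectSpace (hT : ‖T‖ ≤ 1) {p : H × H}
    (hp : p.2 ∈ defectSpace (adjoint T)) : (juliaMap T p).2 ∈ defectSpace T :=
  sub_mem (Submodule.le_topologicalClosure _ ⟨p.1, rfl⟩) (adjoint_apply_mem_defectSpace hT hp)

noncomputable def juliaOperator (hT : ‖T‖ ≤ 1) :
    WithLp 2 (H × defectSpace (adjoint T)) ≃ₗᵢ[ℂ] WithLp 2 (H × defectSpace T) where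
  toFun v := WithLp.toLp 2 ((juliaMap T (v.fst, v.snd)).1,
    ⟨(juliaMap T (v.fst, v.snd)).2, juliaMap_snd_mem_defectSpace hT v.snd.2⟩)
  invFun w := WithLp.toLp 2 ((juliaMap (adjoint T) (w.fst, w.snd)).1,
    ⟨(juliaMap (adjoint T) (w.fst, w.snd)).2, juliaMap_snd_mem_defectSpace
      (norm_adjoint_le_one hT) ((adjoint_adjoint T).symm ▸ w.snd.2)⟩)
  map_add' v w := by
    refine WithLp.ofLp_injective 2 (Prod.ext ?_ (Subtype.ext ?_)) <;> simp [juliaMap] <;> abel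
  map_smul' c v := by
    refine WithLp.ofLp_injective 2 (Prod.ext ?_ (Subtype.ext ?_)) <;> simp [juliaMap, smul_sub]
  left_inv v := by
    refine WithLp.ofLp_injective 2 (Prod.ext ?_ (Subtype.ext ?_))
    · exact congr($(juliaMap_adjoint_juliaMap hT (v.fst, v.snd)).1)
    · exact congr($(juliaMap_adjoint_juliaMap hT (v.fst, v.snd)).2)
  right_inv w := by
    refine WithLp.ofLp_injective 2 (Prod.ext ?_ (Subtype.ext ?_))
    · exact congr($(juliaMap_juliaMap_adjoint hT (w.fst, w.snd)).1)
    · exact congr($(juliaMap_juliaMap_adjoint hT (w.fst, w.snd)).2)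
  norm_map' v := by
    simp only [WithLp.prod_norm_eq_of_L2]
    exact congrArg Real.sqrt (norm_juliaMap_sq hT (v.fst, v.snd))

end Julia

theorem unitary_dilation_of_unitaries_general
    {H : Type*} [NormedAddCommGroup H] [InnerProductSpace ℂ H] [CompleteSpace H]
    {E : Type*} [NormedAddCommGroup E] [InnerProductSpace ℂ E] [CompleteSpace E]
    (T : H →L[ℂ] H) (hT : ‖T‖ ≤ 1)
    (ω : E ≃ₗᵢ[ℂ] defectSpace (ContinuousLinearMap.adjoint T))
    (ωs : E ≃ₗᵢ[ℂ] defectSpace T) :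
    ∃ U : WithLp 2 (H × E) →L[ℂ] WithLp 2 (H × E),
      IsUnitaryDilation T U ∧
      ∀ (x : H) (e : E),
        let v := WithLp.equiv 2 (H × E) (U ((WithLp.equiv 2 (H × E)).symm (x, e)))
        v.1 = T x + defectOp (ContinuousLinearMap.adjoint T) (ω e : H) ∧
          (ωs v.2 : H) = defectOp T x - ContinuousLinearMap.adjoint T (ω e : H) := by
  let U : unitary (WithLp 2 (H × E) →L[ℂ] WithLp 2 (H × E)) :=
    Unitary.linearIsometryEquiv.symm <|
      (LinearIsometryEquiv.withLpProdCongr 2 (.refl ℂ H) ω).trans <|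
        (juliaOperator hT).trans (LinearIsometryEquiv.withLpProdCongr 2 (.refl ℂ H) ωs).symm
  refine ⟨U, ⟨U.2, fun x => ?_⟩, fun x e => ⟨rfl, ?_⟩⟩
  · change T x = T x + defectOp (adjoint T) (ω 0 : H)
    simp
  · exact congrArg Subtype.val (ωs.apply_symm_apply _)

/-- Conversely, for any unitaries `ω : E → 𝒟_{T*}` and `ω_* : E → 𝒟_T`,
the formula `U(x ⊕ e) = (T x + D_{T*}(ω e)) ⊕ (ω_*⁻¹(D_T x) - ω_*⁻¹(T*(ω e)))` defines a
unitary `N`-dilation of `T` on `H ⊕ E`.  (The second component is expressed equivalently,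
after applying the unitary `ω_*`, as `ω_*(second component of U(x ⊕ e)) = D_T x - T*(ω e)`
in `H`.) -/
theorem unitary_dilation_of_unitaries
    {H : Type*} [NormedAddCommGroup H] [InnerProductSpace ℂ H] [CompleteSpace H]
    {E : Type*} [NormedAddCommGroup E] [InnerProductSpace ℂ E] [CompleteSpace E]
    (N : ℕ) (T : H →L[ℂ] H) (hT : ‖T‖ ≤ 1)
    [FiniteDimensional ℂ (defectSpace T)]
    [FiniteDimensional ℂ (defectSpace (ContinuousLinearMap.adjoint T))]
    [FiniteDimensional ℂ E]
    (hdT : Module.finrank ℂ (defectSpace T) = N)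
    (hdTs : Module.finrank ℂ (defectSpace (ContinuousLinearMap.adjoint T)) = N)
    (hE : Module.finrank ℂ E = N)
    (ω : E ≃ₗᵢ[ℂ] defectSpace (ContinuousLinearMap.adjoint T))
    (ωs : E ≃ₗᵢ[ℂ] defectSpace T) :
    ∃ U : WithLp 2 (H × E) →L[ℂ] WithLp 2 (H × E),
      IsUnitaryDilation T U ∧
      ∀ (x : H) (e : E),
        let v := WithLp.equiv 2 (H × E) (U ((WithLp.equiv 2 (H × E)).symm (x, e)))
        v.1 = T x + defectOp (ContinuousLinearMap.adjoint T) (ω e : H) ∧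
          (ωs v.2 : H) = defectOp T x - ContinuousLinearMap.adjoint T (ω e : H) :=
  unitary_dilation_of_unitaries_general T hT ω ωs
end

section
/- Let T be a contraction on a complex Hilbert space H whose defect spaces 𝒟_T and 𝒟_{T*} both have finite dimension N, let E and E' be complex Hilbert spaces of dimension N, and let u be a fixed unitary operator on H ⊕ E whose compression to H is T. Then every unitary operator U on H ⊕ E' whose compression to H is T has the form U = (I_H ⊕ Ω_*⁻¹) ∘ u ∘ (I_H ⊕ Ω), i.e. U(x ⊕ e') = (I_H ⊕ Ω_*⁻¹)(u(x ⊕ Ω e')) for all x ∈ H, e' ∈ E', for some unitary operators Ω, Ω_* : E' → E. -/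
/-!
A unitary dilation `U` of `T` on `H ⊕ E` has the block form `[[T, D_{T*} Ψ⁻¹], [Φ D_T, *]]` for
unitaries `Φ : 𝒟_T → E` and `Ψ : 𝒟_{T*} → E`: the first column of `U` is isometric, so
`‖(U (x ⊕ 0))_E‖ = ‖D_T x‖`, and the same argument for `U*`, a unitary dilation of `T*`, gives
the first row. With `Ω = Ψ_u Ψ_U⁻¹` and `Ω_* = Φ_u Φ_U⁻¹`, the unitary `(I ⊕ Ω_*⁻¹) u (I ⊕ Ω)`
then has the same first row and first column as `U`. Two isometries of `H ⊕ E'` sharing these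
coincide: the rest of each is orthogonal to the common first column, whose `E'`-components
exhaust `E'`.
-/
open scoped InnerProductSpace
open Filter Topology

open ContinuousLinearMap

lemma one_sub_star_mul_self_nonneg {A : Type*} [CStarAlgebra A] [PartialOrder A]
    [StarOrderedRing A] {a : A} (ha : ‖a‖ ≤ 1) : 0 ≤ 1 - star a * a := by
  rw [sub_nonneg, ← CStarAlgebra.norm_le_one_iff_of_nonneg _ (star_mul_self_nonneg a),
    CStarRing.norm_star_mul_self]
  exact mul_le_one₀ ha (norm_nonneg a) ha

section Defect

variable {H : Type*} [NormedAddCommGroup H] [InnerProductSpace ℂ H] [CompleteSpace H]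

lemma isSelfAdjoint_defectOp (T : H →L[ℂ] H) : IsSelfAdjoint (defectOp T) :=
  (CFC.sqrt_nonneg _).isSelfAdjoint

lemma defectOp_mem_defectSpace (T : H →L[ℂ] H) (x : H) : defectOp T x ∈ defectSpace T :=
  Submodule.le_topologicalClosure _ (LinearMap.mem_range_self _ x)

lemma norm_defectOp_apply_sq {T : H →L[ℂ] H} (hT : ‖T‖ ≤ 1) (x : H) :
    ‖defectOp T x‖ ^ 2 = ‖x‖ ^ 2 - ‖T x‖ ^ 2 := by
  have hsq : defectOp T * defectOp T = 1 - adjoint T * T :=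
    CFC.sqrt_mul_sqrt_self _ (one_sub_star_mul_self_nonneg hT)
  have key : ⟪defectOp T x, defectOp T x⟫_ℂ = ⟪x, x⟫_ℂ - ⟪T x, T x⟫_ℂ := by
    rw [← adjoint_inner_right, (isSelfAdjoint_defectOp T).adjoint_eq, ← mul_apply_eq_comp, hsq,
      sub_apply, one_apply_eq_self, mul_apply_eq_comp, inner_sub_right, adjoint_inner_right]
  simp only [inner_self_eq_norm_sq_to_K] at key
  exact_mod_cast key

lemma range_defectOp_eq_defectSpace (T : H →L[ℂ] H) [FiniteDimensional ℂ (defectSpace T)] :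
    LinearMap.range (defectOp T : H →ₗ[ℂ] H) = defectSpace T := by
  have hle : LinearMap.range (defectOp T : H →ₗ[ℂ] H) ≤ defectSpace T :=
    Submodule.le_topologicalClosure _
  have := Submodule.finiteDimensional_of_le hle
  exact (Submodule.closed_of_finiteDimensional _).submodule_topologicalClosure_eq.symm

end Defect

lemma LinearMap.exists_linearIsometry_range_of_norm_eq {R M N F : Type*} [Ring R]
    [AddCommGroup M] [Module R M] [SeminormedAddCommGroup N] [Module R N]
    [NormedAddCommGroup F] [Module R F] (A : M →ₗ[R] N) (C : M →ₗ[R] F)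
    (h : ∀ x, ‖C x‖ = ‖A x‖) :
    ∃ Φ : LinearMap.range A →ₗᵢ[R] F, ∀ x, Φ ⟨A x, LinearMap.mem_range_self A x⟩ = C x := by
  have hker : LinearMap.ker A ≤ LinearMap.ker C := fun x hx => by
    rw [LinearMap.mem_ker, ← norm_eq_zero, h, LinearMap.mem_ker.mp hx, norm_zero]
  let Φ := (LinearMap.ker A).liftQ C hker ∘ₗ A.quotKerEquivRange.symm.toLinearMap
  have hΦ : ∀ x, Φ ⟨A x, LinearMap.mem_range_self A x⟩ = C x := fun x => by
    simp [Φ, LinearMap.quotKerEquivRange_symm_apply_image]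
  refine ⟨⟨Φ, ?_⟩, hΦ⟩
  rintro ⟨_, x, rfl⟩
  change ‖Φ ⟨A x, _⟩‖ = ‖A x‖
  rw [hΦ, h]

lemma eq_of_fst_eq_of_inner_map_map {𝕜 H E X ι : Type*} [RCLike 𝕜]
    [NormedAddCommGroup H] [InnerProductSpace 𝕜 H] [NormedAddCommGroup E] [InnerProductSpace 𝕜 E]
    [NormedAddCommGroup X] [InnerProductSpace 𝕜 X] {U V : X → WithLp 2 (H × E)}
    (hU : ∀ a b, ⟪U a, U b⟫_𝕜 = ⟪a, b⟫_𝕜) (hV : ∀ a b, ⟪V a, V b⟫_𝕜 = ⟪a, b⟫_𝕜)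
    (j : ι → X) (hj : ∀ i, U (j i) = V (j i)) (hsurj : Function.Surjective fun i => (U (j i)).snd)
    (hfst : ∀ z, (U z).fst = (V z).fst) : U = V := by
  funext z
  have horth : ∀ i, ⟪(U (j i)).snd, (U z - V z).snd⟫_𝕜 = 0 := fun i => by
    have h : ⟪U (j i), U z - V z⟫_𝕜 = 0 := by rw [inner_sub_right, hU, hj, hV, sub_self]
    simpa [hfst] using h
  obtain ⟨i, hi⟩ := hsurj (U z - V z).snd
  have hsnd : (U z).snd = (V z).snd := by
    simpa [hi, sub_eq_zero] using horth i
  exact WithLp.ofLp_injective 2 (Prod.ext (hfst z) hsnd)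

namespace IsUnitaryDilation

variable {H : Type*} [NormedAddCommGroup H] [InnerProductSpace ℂ H] [CompleteSpace H]
  {E : Type*} [NormedAddCommGroup E] [InnerProductSpace ℂ E] [CompleteSpace E]
  {T : H →L[ℂ] H} {U : WithLp 2 (H × E) →L[ℂ] WithLp 2 (H × E)}

lemma fst_apply_toLp_fst (hU : IsUnitaryDilation T U) (x : H) :
    (U (WithLp.toLp 2 (x, 0))).fst = T x :=
  (hU.2 x).symm

lemma fst_apply (hU : IsUnitaryDilation T U) (z : WithLp 2 (H × E)) :
    (U z).fst = T z.fst + (U (WithLp.toLp 2 (0, z.snd))).fst := by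
  have hz : z = WithLp.toLp 2 (z.fst, 0) + WithLp.toLp 2 (0, z.snd) := by
    rw [← WithLp.toLp_add, Prod.mk_add_mk, add_zero, zero_add]; rfl
  conv_lhs => rw [hz]
  rw [map_add, WithLp.add_fst, hU.fst_apply_toLp_fst]

lemma star (hU : IsUnitaryDilation T U) : IsUnitaryDilation (adjoint T) (star U) := by
  refine ⟨Unitary.star_mem hU.1, fun x => ext_inner_left ℂ fun y => ?_⟩
  calc ⟪y, adjoint T x⟫_ℂ = ⟪(U (WithLp.toLp 2 (y, 0))).fst, x⟫_ℂ := by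
        rw [adjoint_inner_right, hU.fst_apply_toLp_fst]
    _ = ⟪U (WithLp.toLp 2 (y, 0)), WithLp.toLp 2 (x, (0 : E))⟫_ℂ := by simp
    _ = ⟪WithLp.toLp 2 (y, (0 : E)), Star.star U (WithLp.toLp 2 (x, 0))⟫_ℂ := by
        rw [star_eq_adjoint, adjoint_inner_right]
    _ = _ := by simp

lemma norm_snd_apply_toLp_fst (hT : ‖T‖ ≤ 1) (hU : IsUnitaryDilation T U) (x : H) :
    ‖(U (WithLp.toLp 2 (x, 0))).snd‖ = ‖defectOp T x‖ := by
  have hnorm := WithLp.prod_norm_sq_eq_of_L2 (U (WithLp.toLp 2 (x, 0)))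
  rw [norm_map_of_mem_unitary hU.1, WithLp.norm_toLp_fst, hU.fst_apply_toLp_fst] at hnorm
  rw [← sq_eq_sq₀ (norm_nonneg _) (norm_nonneg _), norm_defectOp_apply_sq hT]
  linarith

lemma exists_snd_apply_toLp_fst (hT : ‖T‖ ≤ 1) (hU : IsUnitaryDilation T U)
    [FiniteDimensional ℂ (defectSpace T)] [FiniteDimensional ℂ E]
    (hdim : Module.finrank ℂ (defectSpace T) = Module.finrank ℂ E) :
    ∃ Φ : defectSpace T ≃ₗᵢ[ℂ] E, ∀ x,
      (U (WithLp.toLp 2 (x, 0))).snd = Φ ⟨defectOp T x, defectOp_mem_defectSpace T x⟩ := by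
  let C : H →ₗ[ℂ] E := WithLp.sndₗ 2 ℂ H E ∘ₗ (U : WithLp 2 (H × E) →ₗ[ℂ] WithLp 2 (H × E)) ∘ₗ
    (WithLp.linearEquiv 2 ℂ (H × E)).symm.toLinearMap ∘ₗ LinearMap.inl ℂ H E
  obtain ⟨Φ, hΦ⟩ := LinearMap.exists_linearIsometry_range_of_norm_eq
    (defectOp T : H →ₗ[ℂ] H) C (hU.norm_snd_apply_toLp_fst hT)
  let Φ' :=
    Φ.comp (LinearIsometryEquiv.ofEq _ _ (range_defectOp_eq_defectSpace T)).symm.toLinearIsometry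
  exact ⟨Φ'.toLinearIsometryEquiv hdim, fun x => (hΦ x).symm⟩

lemma surjective_snd_apply_toLp_fst (hT : ‖T‖ ≤ 1) (hU : IsUnitaryDilation T U)
    [FiniteDimensional ℂ (defectSpace T)] [FiniteDimensional ℂ E]
    (hdim : Module.finrank ℂ (defectSpace T) = Module.finrank ℂ E) :
    Function.Surjective fun x : H => (U (WithLp.toLp 2 (x, 0))).snd := by
  obtain ⟨Φ, hΦ⟩ := hU.exists_snd_apply_toLp_fst hT hdim
  intro e
  obtain ⟨x, hx⟩ := (range_defectOp_eq_defectSpace T).ge (Φ.symm e).2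
  exact ⟨x, (hΦ x).trans ((congrArg Φ (Subtype.ext hx)).trans (Φ.apply_symm_apply e))⟩

lemma exists_fst_apply_toLp_snd (hT : ‖T‖ ≤ 1) (hU : IsUnitaryDilation T U)
    [FiniteDimensional ℂ (defectSpace (adjoint T))] [FiniteDimensional ℂ E]
    (hdim : Module.finrank ℂ (defectSpace (adjoint T)) = Module.finrank ℂ E) :
    ∃ Ψ : defectSpace (adjoint T) ≃ₗᵢ[ℂ] E, ∀ e,
      (U (WithLp.toLp 2 (0, e))).fst = defectOp (adjoint T) (Ψ.symm e) := by
  obtain ⟨Ψ, hΨ⟩ := hU.star.exists_snd_apply_toLp_fst (by rwa [LinearIsometryEquiv.norm_map]) hdim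
  refine ⟨Ψ, fun e => ext_inner_left ℂ fun y => ?_⟩
  calc ⟪y, (U (WithLp.toLp 2 (0, e))).fst⟫_ℂ
      = ⟪WithLp.toLp 2 (y, (0 : E)), U (WithLp.toLp 2 (0, e))⟫_ℂ := by simp
    _ = ⟪(Star.star U (WithLp.toLp 2 (y, 0))).snd, e⟫_ℂ := by
        rw [star_eq_adjoint, ← adjoint_inner_left]; simp
    _ = ⟪defectOp (adjoint T) y, Ψ.symm e⟫_ℂ := by
        rw [hΨ]
        conv_lhs => rw [← Ψ.apply_symm_apply e]
        rw [Ψ.inner_map_map, Submodule.coe_inner]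
    _ = ⟪y, defectOp (adjoint T) (Ψ.symm e)⟫_ℂ := by
        rw [← adjoint_inner_right, (isSelfAdjoint_defectOp _).adjoint_eq]

end IsUnitaryDilation

/-- If `u` is a fixed unitary `N`-dilation of `T` on `H ⊕ E`, then every
unitary `N`-dilation `U` of `T` on `H ⊕ E'` has the form
`U = (I_H ⊕ Ω_*⁻¹) ∘ u ∘ (I_H ⊕ Ω)` for some unitaries `Ω, Ω_* : E' → E`. -/
theorem unitary_dilation_eq_conjugate_of_fixed_dilation
    {H : Type*} [NormedAddCommGroup H] [InnerProductSpace ℂ H] [CompleteSpace H]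
    {E : Type*} [NormedAddCommGroup E] [InnerProductSpace ℂ E] [CompleteSpace E]
    {E' : Type*} [NormedAddCommGroup E'] [InnerProductSpace ℂ E'] [CompleteSpace E']
    (N : ℕ) (T : H →L[ℂ] H) (hT : ‖T‖ ≤ 1)
    [FiniteDimensional ℂ (defectSpace T)]
    [FiniteDimensional ℂ (defectSpace (ContinuousLinearMap.adjoint T))]
    [FiniteDimensional ℂ E] [FiniteDimensional ℂ E']
    (hdT : Module.finrank ℂ (defectSpace T) = N)
    (hdTs : Module.finrank ℂ (defectSpace (ContinuousLinearMap.adjoint T)) = N)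
    (hE : Module.finrank ℂ E = N) (hE' : Module.finrank ℂ E' = N)
    (u : WithLp 2 (H × E) →L[ℂ] WithLp 2 (H × E)) (hu : IsUnitaryDilation T u)
    (U : WithLp 2 (H × E') →L[ℂ] WithLp 2 (H × E')) (hU : IsUnitaryDilation T U) :
    ∃ (Ω : E' ≃ₗᵢ[ℂ] E) (Ωs : E' ≃ₗᵢ[ℂ] E),
      ∀ (x : H) (e' : E'),
        let w := WithLp.equiv 2 (H × E) (u ((WithLp.equiv 2 (H × E)).symm (x, Ω e')))
        WithLp.equiv 2 (H × E') (U ((WithLp.equiv 2 (H × E')).symm (x, e'))) =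
          (w.1, Ωs.symm w.2) := by
  obtain ⟨Φ, hΦ⟩ := hu.exists_snd_apply_toLp_fst hT (hdT.trans hE.symm)
  obtain ⟨Φ', hΦ'⟩ := hU.exists_snd_apply_toLp_fst hT (hdT.trans hE'.symm)
  obtain ⟨Ψ, hΨ⟩ := hu.exists_fst_apply_toLp_snd hT (hdTs.trans hE.symm)
  obtain ⟨Ψ', hΨ'⟩ := hU.exists_fst_apply_toLp_snd hT (hdTs.trans hE'.symm)
  let Ω := Ψ'.symm.trans Ψ
  let Ωs := Φ'.symm.trans Φ
  let L := LinearIsometryEquiv.withLpProdCongr 2 (LinearIsometryEquiv.refl ℂ H) Ω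
  let Ls := LinearIsometryEquiv.withLpProdCongr 2 (LinearIsometryEquiv.refl ℂ H) Ωs.symm
  have hUV : ⇑U = Ls ∘ u ∘ L := by
    refine eq_of_fst_eq_of_inner_map_map (inner_map_map_of_mem_unitary hU.1)
      (fun a b => by simp [inner_map_map_of_mem_unitary hu.1]) (fun x : H => WithLp.toLp 2 (x, 0))
      (fun x => ?_) (hU.surjective_snd_apply_toLp_fst hT (hdT.trans hE'.symm)) (fun z => ?_)
    · refine WithLp.ofLp_injective 2 (Prod.ext ?_ ?_)
      · simp [L, Ls, LinearIsometryEquiv.coe_refl, hU.fst_apply_toLp_fst, hu.fst_apply_toLp_fst]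
      · simp [L, Ls, Ωs, hΦ, hΦ']
    · rw [hU.fst_apply, hΨ']
      simp only [L, Ls, Function.comp_apply, LinearIsometryEquiv.withLpProdCongr_apply]
      rw [hu.fst_apply]
      simp [hΨ, Ω, LinearIsometryEquiv.coe_refl]
  refine ⟨Ω, Ωs, fun x e' => ?_⟩
  simpa [L, Ls, LinearIsometryEquiv.coe_refl] using
    congrArg WithLp.ofLp (congrFun hUV (WithLp.toLp 2 (x, e')))
end

section
/- Let T be a contraction on a nonzero complex Hilbert space H whose defect spaces 𝒟_T and 𝒟_{T*} both have finite dimension N, and let V be a unitary operator on a nonzero complex Hilbert space H'. Suppose the family of closures of numerical ranges of unitary N-dilations of T (unitary operators on H ⊕ ℂ^N whose compression to H is T) wraps cl W(T). Then the family of closures of numerical ranges of unitary N-dilations of T ⊕ V (unitary operators on (H ⊕ H') ⊕ ℂ^N whose compression to H ⊕ H' is T ⊕ V) wraps cl W(T ⊕ V). -/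
open scoped InnerProductSpace
open Filter Topology

/-- A family `(τ x)_{x ∈ X}` of subsets of `ℂ` *wraps* a set `A ⊆ ℂ` if every open
half-plane `{z : Re (c z) < r}` (`c ≠ 0`) containing `A` contains some member `τ x`. -/
def Wraps {X : Type*} (A : Set ℂ) (τ : X → Set ℂ) : Prop :=
  ∀ (c : ℂ), c ≠ 0 → ∀ r : ℝ,
    A ⊆ {z : ℂ | (c * z).re < r} → ∃ x : X, τ x ⊆ {z : ℂ | (c * z).re < r}

/-- The direct sum `T ⊕ V` of two operators, acting on the Hilbert space direct sum
`WithLp 2 (H × H')`. -/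
noncomputable def prodOp {H H' : Type*} [NormedAddCommGroup H] [InnerProductSpace ℂ H]
    [NormedAddCommGroup H'] [InnerProductSpace ℂ H']
    (T : H →L[ℂ] H) (V : H' →L[ℂ] H') : WithLp 2 (H × H') →L[ℂ] WithLp 2 (H × H') :=
  ((WithLp.prodContinuousLinearEquiv 2 ℂ H H').symm.toContinuousLinearMap).comp
    ((T.prodMap V).comp (WithLp.prodContinuousLinearEquiv 2 ℂ H H').toContinuousLinearMap)

/-!
If `U` is a unitary `N`-dilation of `T` on `H ⊕ ℂ^N`, then `U ⊕ V`, with the summands `ℂ^N` and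
`H'` interchanged, is a unitary `N`-dilation of `T ⊕ V`, and `W(U ⊕ V)` lies in the convex hull
of `W(U) ∪ W(V)`. An open half-plane containing the compact set `cl W(T ⊕ V)` also contains it
after a slight shrinking; the shrunken half-plane still contains `W(T)` and `W(V)`, the
hypothesis provides `U` with `W(U)` inside it, and then `cl W(U ⊕ V)` lies in the original one.
-/

open ContinuousLinearMap

lemma IsCompact.exists_lt_subset_setOf_lt {α : Type*} [TopologicalSpace α] {K : Set α}
    (hK : IsCompact K) {f : α → ℝ} (hf : ContinuousOn f K) {r : ℝ}
    (h : K ⊆ {x | f x < r}) : ∃ r₁ < r, K ⊆ {x | f x < r₁} := by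
  rcases K.eq_empty_or_nonempty with rfl | hne
  · exact ⟨r - 1, by linarith, Set.empty_subset _⟩
  obtain ⟨x₀, hx₀, hmax⟩ := hK.exists_isMaxOn hne hf
  obtain ⟨r₁, hfr₁, hr₁⟩ := exists_between (show f x₀ < r from h hx₀)
  exact ⟨r₁, hr₁, fun x hx => (hmax hx).trans_lt hfr₁⟩

lemma convex_setOf_re_mul_lt (c : ℂ) (r : ℝ) : Convex ℝ {z : ℂ | (c * z).re < r} :=
  convex_halfSpace_lt ⟨fun z w => by simp [mul_add],
    fun a z => by simp [Complex.real_smul, mul_left_comm c]⟩ r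

/-- `((x, y), z) ↦ ((x, z), y)` -/
noncomputable def withLpProdRightComm (X Y Z : Type*)
    [NormedAddCommGroup X] [InnerProductSpace ℂ X] [NormedAddCommGroup Y]
    [InnerProductSpace ℂ Y] [NormedAddCommGroup Z] [InnerProductSpace ℂ Z] :
    WithLp 2 (WithLp 2 (X × Y) × Z) ≃ₗᵢ[ℂ] WithLp 2 (WithLp 2 (X × Z) × Y) :=
  (LinearIsometryEquiv.withLpProdAssoc 2 ℂ X Y Z).trans <|
    (LinearIsometryEquiv.withLpProdCongr 2 (.refl ℂ X)
      (LinearIsometryEquiv.withLpProdComm 2 ℂ Y Z)).trans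
      (LinearIsometryEquiv.withLpProdAssoc 2 ℂ X Z Y).symm

section NumericalRange

variable {X Y : Type*} [NormedAddCommGroup X] [InnerProductSpace ℂ X]
  [NormedAddCommGroup Y] [InnerProductSpace ℂ Y]

@[simp]
lemma prodOp_apply_fst (A : X →L[ℂ] X) (B : Y →L[ℂ] Y) (ξ : WithLp 2 (X × Y)) :
    (prodOp A B ξ).fst = A ξ.fst := rfl

@[simp]
lemma prodOp_apply_snd (A : X →L[ℂ] X) (B : Y →L[ℂ] Y) (ξ : WithLp 2 (X × Y)) :
    (prodOp A B ξ).snd = B ξ.snd := rfl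

lemma prodOp_mul (A A' : X →L[ℂ] X) (B B' : Y →L[ℂ] Y) :
    prodOp A B * prodOp A' B' = prodOp (A * A') (B * B') := rfl

lemma prodOp_one : prodOp (1 : X →L[ℂ] X) (1 : Y →L[ℂ] Y) = 1 := rfl

lemma inner_prodOp_apply (A : X →L[ℂ] X) (B : Y →L[ℂ] Y) (ξ η : WithLp 2 (X × Y)) :
    ⟪ξ, prodOp A B η⟫_ℂ = ⟪ξ.fst, A η.fst⟫_ℂ + ⟪ξ.snd, B η.snd⟫_ℂ :=
  WithLp.prod_inner_apply _ _

lemma numericalRange_subset_closedBall (A : X →L[ℂ] X) :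
    numericalRange A ⊆ Metric.closedBall 0 ‖A‖ := by
  rintro _ ⟨x, hx, rfl⟩
  rw [mem_closedBall_zero_iff]
  calc ‖⟪x, A x⟫_ℂ‖ ≤ ‖x‖ * (‖A‖ * ‖x‖) :=
        (norm_inner_le_norm _ _).trans (by gcongr; exact A.le_opNorm x)
    _ = ‖A‖ := by rw [hx]; ring

lemma isCompact_closure_numericalRange (A : X →L[ℂ] X) : IsCompact (closure (numericalRange A)) :=
  (Metric.isBounded_closedBall.subset (numericalRange_subset_closedBall A)).isCompact_closure

lemma exists_mem_numericalRange_inner_eq_smul (A : X →L[ℂ] X) {x : X} (hx : x ≠ 0) :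
    ∃ a ∈ numericalRange A, ⟪x, A x⟫_ℂ = (‖x‖ ^ 2 : ℝ) • a := by
  have hx' : (‖x‖ : ℂ) ≠ 0 := by simpa using hx
  refine ⟨_, ⟨(‖x‖⁻¹ : ℂ) • x, norm_smul_inv_norm hx, rfl⟩, ?_⟩
  simp only [map_smul, inner_smul_left, inner_smul_right, map_inv₀, Complex.conj_ofReal,
    Complex.real_smul]
  field_simp
  push_cast
  ring

lemma numericalRange_subset_prodOp_left (A : X →L[ℂ] X) (B : Y →L[ℂ] Y) :
    numericalRange A ⊆ numericalRange (prodOp A B) := by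
  rintro _ ⟨x, hx, rfl⟩
  refine ⟨WithLp.toLp 2 (x, 0), ?_, ?_⟩
  · simp [hx]
  · simp

lemma numericalRange_subset_prodOp_right (A : X →L[ℂ] X) (B : Y →L[ℂ] Y) :
    numericalRange B ⊆ numericalRange (prodOp A B) := by
  rintro _ ⟨y, hy, rfl⟩
  refine ⟨WithLp.toLp 2 (0, y), ?_, ?_⟩
  · simp [hy]
  · simp

lemma numericalRange_prodOp_subset_convexHull (A : X →L[ℂ] X) (B : Y →L[ℂ] Y) :
    numericalRange (prodOp A B) ⊆ convexHull ℝ (numericalRange A ∪ numericalRange B) := by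
  rintro _ ⟨ξ, hξ, rfl⟩
  have hnorm : ‖ξ.fst‖ ^ 2 + ‖ξ.snd‖ ^ 2 = 1 := by
    rw [← WithLp.prod_norm_sq_eq_of_L2, hξ, one_pow]
  rw [inner_prodOp_apply]
  rcases eq_or_ne ξ.fst 0 with h₁ | h₁
  · refine subset_convexHull ℝ _ (Or.inr ⟨ξ.snd, ?_, by simp [h₁]⟩)
    simpa [h₁, pow_eq_one_iff_of_nonneg] using hnorm
  rcases eq_or_ne ξ.snd 0 with h₂ | h₂
  · refine subset_convexHull ℝ _ (Or.inl ⟨ξ.fst, ?_, by simp [h₂]⟩)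
    simpa [h₂, pow_eq_one_iff_of_nonneg] using hnorm
  obtain ⟨a, ha, hxa⟩ := exists_mem_numericalRange_inner_eq_smul A h₁
  obtain ⟨b, hb, hxb⟩ := exists_mem_numericalRange_inner_eq_smul B h₂
  rw [hxa, hxb]
  have hsub := subset_convexHull ℝ (numericalRange A ∪ numericalRange B)
  exact convex_convexHull ℝ _ (hsub (.inl ha)) (hsub (.inr hb)) (by positivity) (by positivity)
    hnorm

lemma numericalRange_conjStarAlgEquiv [CompleteSpace X] [CompleteSpace Y] (e : X ≃ₗᵢ[ℂ] Y)
    (A : X →L[ℂ] X) : numericalRange (e.conjStarAlgEquiv A) = numericalRange A := by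
  ext z
  constructor
  · rintro ⟨y, hy, rfl⟩
    refine ⟨e.symm y, by rwa [e.symm.norm_map], ?_⟩
    rw [LinearIsometryEquiv.conjStarAlgEquiv_apply_apply, ← e.inner_map_map,
      e.apply_symm_apply]
  · rintro ⟨x, hx, rfl⟩
    refine ⟨e x, by rwa [e.norm_map], ?_⟩
    rw [LinearIsometryEquiv.conjStarAlgEquiv_apply_apply, e.symm_apply_apply, e.inner_map_map]

end NumericalRange

section Unitary

variable {X Y : Type*} [NormedAddCommGroup X] [InnerProductSpace ℂ X] [CompleteSpace X]
  [NormedAddCommGroup Y] [InnerProductSpace ℂ Y] [CompleteSpace Y]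

lemma adjoint_prodOp (A : X →L[ℂ] X) (B : Y →L[ℂ] Y) :
    adjoint (prodOp A B) = prodOp (adjoint A) (adjoint B) := by
  refine ((eq_adjoint_iff _ _).mpr fun ξ η => ?_).symm
  simp only [WithLp.prod_inner_apply, WithLp.ofLp_fst, WithLp.ofLp_snd, prodOp_apply_fst,
    prodOp_apply_snd, adjoint_inner_left]

lemma prodOp_mem_unitary {A : X →L[ℂ] X} {B : Y →L[ℂ] Y} (hA : A ∈ unitary (X →L[ℂ] X))
    (hB : B ∈ unitary (Y →L[ℂ] Y)) :
    prodOp A B ∈ unitary (WithLp 2 (X × Y) →L[ℂ] WithLp 2 (X × Y)) := by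
  rw [Unitary.mem_iff, star_eq_adjoint, adjoint_prodOp, ← star_eq_adjoint, ← star_eq_adjoint,
    prodOp_mul, prodOp_mul, Unitary.star_mul_self_of_mem hA, Unitary.star_mul_self_of_mem hB,
    Unitary.mul_star_self_of_mem hA, Unitary.mul_star_self_of_mem hB, prodOp_one]
  exact ⟨rfl, rfl⟩

lemma IsUnitaryDilation.prodOp_of_mem_unitary {E : Type*} [NormedAddCommGroup E]
    [InnerProductSpace ℂ E] [CompleteSpace E] {T : X →L[ℂ] X}
    {U : WithLp 2 (X × E) →L[ℂ] WithLp 2 (X × E)} (hU : IsUnitaryDilation T U)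
    {V : Y →L[ℂ] Y} (hV : V ∈ unitary (Y →L[ℂ] Y)) :
    IsUnitaryDilation (prodOp T V)
      ((withLpProdRightComm X Y E).symm.conjStarAlgEquiv (prodOp U V)) := by
  refine ⟨Unitary.map_mem (withLpProdRightComm X Y E).symm.conjStarAlgEquiv.toStarAlgHom
    (prodOp_mem_unitary hU.1 hV), fun x => ?_⟩
  change WithLp.toLp 2 (T x.fst, V x.snd) =
    WithLp.toLp 2 ((U (WithLp.toLp 2 (x.fst, 0))).fst, V x.snd)
  rw [hU.2 x.fst]
  rfl

end Unitary

theorem wraps_dilations_prod_unitary_general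
    {H : Type*} [NormedAddCommGroup H] [InnerProductSpace ℂ H] [CompleteSpace H]
    {H' : Type*} [NormedAddCommGroup H'] [InnerProductSpace ℂ H'] [CompleteSpace H']
    (N : ℕ) (T : H →L[ℂ] H)
    (V : H' →L[ℂ] H') (hV : V ∈ unitary (H' →L[ℂ] H'))
    (hwrap : Wraps (closure (numericalRange T))
      (fun U : {U : WithLp 2 (H × EuclideanSpace ℂ (Fin N)) →L[ℂ]
          WithLp 2 (H × EuclideanSpace ℂ (Fin N)) // IsUnitaryDilation T U} =>
        closure (numericalRange U.1))) :
    Wraps (closure (numericalRange (prodOp T V)))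
      (fun U : {U : WithLp 2 (WithLp 2 (H × H') × EuclideanSpace ℂ (Fin N)) →L[ℂ]
          WithLp 2 (WithLp 2 (H × H') × EuclideanSpace ℂ (Fin N)) //
            IsUnitaryDilation (prodOp T V) U} =>
        closure (numericalRange U.1)) := by
  intro c hc r hK
  have hcont : Continuous fun z : ℂ => (c * z).re := by fun_prop
  obtain ⟨r₁, hr₁, hK₁⟩ :=
    (isCompact_closure_numericalRange _).exists_lt_subset_setOf_lt hcont.continuousOn hK
  obtain ⟨⟨U, hU⟩, hUr₁⟩ :=
    hwrap c hc r₁ ((closure_mono (numericalRange_subset_prodOp_left T V)).trans hK₁)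
  have hVr₁ : numericalRange V ⊆ {z | (c * z).re < r₁} :=
    (numericalRange_subset_prodOp_right T V).trans (subset_closure.trans hK₁)
  refine ⟨⟨_, hU.prodOp_of_mem_unitary hV⟩, ?_⟩
  have hW : numericalRange (prodOp U V) ⊆ {z | (c * z).re < r₁} :=
    (numericalRange_prodOp_subset_convexHull U V).trans <|
      convexHull_min (Set.union_subset (subset_closure.trans hUr₁) hVr₁)
        (convex_setOf_re_mul_lt c r₁)
  dsimp only
  rw [numericalRange_conjStarAlgEquiv]
  exact (closure_mono hW).trans <| (closure_lt_subset_le hcont continuous_const).trans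
    fun z hz => lt_of_le_of_lt hz hr₁

/-- Let `T` be a contraction with `dim 𝒟_T = dim 𝒟_{T*} = N < ∞` and let
`V` be unitary.  If the closures of the numerical ranges of the unitary `N`-dilations of
`T` wrap `closure W(T)`, then the closures of the numerical ranges of the unitary
`N`-dilations of `T ⊕ V` wrap `closure W(T ⊕ V)`. -/
theorem wraps_dilations_prod_unitary
    {H : Type*} [NormedAddCommGroup H] [InnerProductSpace ℂ H] [CompleteSpace H]
    [Nontrivial H]
    {H' : Type*} [NormedAddCommGroup H'] [InnerProductSpace ℂ H'] [CompleteSpace H']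
    [Nontrivial H']
    (N : ℕ) (T : H →L[ℂ] H) (hT : ‖T‖ ≤ 1)
    [FiniteDimensional ℂ (defectSpace T)]
    [FiniteDimensional ℂ (defectSpace (ContinuousLinearMap.adjoint T))]
    (hdT : Module.finrank ℂ (defectSpace T) = N)
    (hdTs : Module.finrank ℂ (defectSpace (ContinuousLinearMap.adjoint T)) = N)
    (V : H' →L[ℂ] H') (hV : V ∈ unitary (H' →L[ℂ] H'))
    (hwrap : Wraps (closure (numericalRange T))
      (fun U : {U : WithLp 2 (H × EuclideanSpace ℂ (Fin N)) →L[ℂ]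
          WithLp 2 (H × EuclideanSpace ℂ (Fin N)) // IsUnitaryDilation T U} =>
        closure (numericalRange U.1))) :
    Wraps (closure (numericalRange (prodOp T V)))
      (fun U : {U : WithLp 2 (WithLp 2 (H × H') × EuclideanSpace ℂ (Fin N)) →L[ℂ]
          WithLp 2 (WithLp 2 (H × H') × EuclideanSpace ℂ (Fin N)) //
            IsUnitaryDilation (prodOp T V) U} =>
        closure (numericalRange U.1)) :=
  wraps_dilations_prod_unitary_general N T V hV hwrap
end
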